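/- Let f : ℝⁿ → ℝⁿ, let A be a real n×n matrix, set F_n(x) := f(x) − A x, let λ > 0 be a real number and w ∈ ℝⁿ. Suppose h : ℝⁿ → ℝ is differentiable and satisfies ⟨∇h(x), f(x)⟩ − λ h(x) + ⟨w, F_n(x)⟩ = 0 for all x. Let ε > 0 and δ ≥ 0 be such that |h(y)| ≤ δ for every y with ‖y‖ ≤ ε. If γ : ℝ → ℝⁿ is a differentiable solution curve γ′(τ) = f(γ(τ)) with γ(0) = x, τ ↦ ⟨w, F_n(γ(τ))⟩ is continuous, and there exists a time t(x) ≥ 0 with ‖γ(t(x))‖ ≤ ε, then |h(x) − ∫₀^{t(x)} e^{−λ τ} ⟨w, F_n(γ(τ))⟩ dτ| ≤ δ. -/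

import Mathlib

open scoped RealInnerProductSpace
open Real Set intervalIntegral

/-!
Along the trajectory, `u τ := h (γ τ)` satisfies `u' = λ u - ⟪w, F_n (γ τ)⟫` by the PDE for `h`.
Variation of constants, i.e. differentiating `exp (-λ τ) u τ`, gives
`h x - ∫₀ᵗ exp (-λ τ) ⟪w, F_n (γ τ)⟫ dτ = exp (-λ t) h (γ t)`, and for `t = t(x)` the right-hand
side is at most `δ` in absolute value because `γ t` lies in the `ε`-ball and `exp (-λ t) ≤ 1`.
-/

theorem HasGradientAt.comp_hasDerivAt {E : Type*} [NormedAddCommGroup E] [InnerProductSpace ℝ E]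
    [CompleteSpace E] {h : E → ℝ} {g v : E} {γ : ℝ → E} {t : ℝ}
    (hh : HasGradientAt h g (γ t)) (hγ : HasDerivAt γ v t) :
    HasDerivAt (h ∘ γ) ⟪g, v⟫ t := by
  simpa only [InnerProductSpace.toDual_apply_apply] using hh.hasFDerivAt.comp_hasDerivAt t hγ

theorem integral_exp_neg_mul_mul_eq_sub {u r : ℝ → ℝ} {lam t : ℝ}
    (hu : ∀ τ ∈ uIcc 0 t, HasDerivAt u (lam * u τ - r τ) τ)
    (hr : IntervalIntegrable r MeasureTheory.volume 0 t) :
    ∫ τ in (0 : ℝ)..t, exp (-lam * τ) * r τ = u 0 - exp (-lam * t) * u t := by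
  have hweighted : ∀ τ ∈ uIcc 0 t,
      HasDerivAt (fun τ => -(exp (-lam * τ) * u τ)) (exp (-lam * τ) * r τ) τ := by
    intro τ hτ
    have hexp : HasDerivAt (fun τ => exp (-lam * τ)) (exp (-lam * τ) * -lam) τ := by
      simpa using ((hasDerivAt_id τ).const_mul (-lam)).exp
    exact (hexp.mul (hu τ hτ)).neg.congr_deriv (by ring)
  rw [integral_eq_sub_of_hasDerivAt hweighted
    (hr.continuousOn_mul (continuous_exp.comp (continuous_const_mul (-lam))).continuousOn),
    mul_zero, exp_zero, one_mul]
  ring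

theorem stmt3_general {n : ℕ}
    (f : EuclideanSpace ℝ (Fin n) → EuclideanSpace ℝ (Fin n))
    (Fn : EuclideanSpace ℝ (Fin n) → EuclideanSpace ℝ (Fin n))
    (lam : ℝ) (hlam : 0 < lam) (w : EuclideanSpace ℝ (Fin n))
    (h : EuclideanSpace ℝ (Fin n) → ℝ)
    (hdiff : Differentiable ℝ h)
    (hpde : ∀ x, ⟪gradient h x, f x⟫ - lam * h x + ⟪w, Fn x⟫ = 0)
    (ε δ : ℝ)
    (hsmall : ∀ y : EuclideanSpace ℝ (Fin n), ‖y‖ ≤ ε → |h y| ≤ δ)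
    (x : EuclideanSpace ℝ (Fin n))
    (γ : ℝ → EuclideanSpace ℝ (Fin n))
    (hγ : ∀ τ, HasDerivAt γ (f (γ τ)) τ)
    (hγ0 : γ 0 = x)
    (hcont : Continuous fun τ => (⟪w, Fn (γ τ)⟫ : ℝ))
    (tx : ℝ) (htx : 0 ≤ tx) (hreach : ‖γ tx‖ ≤ ε) :
    |h x - ∫ τ in (0 : ℝ)..tx, Real.exp (-lam * τ) * ⟪w, Fn (γ τ)⟫| ≤ δ := by
  have hflow : ∀ τ, HasDerivAt (h ∘ γ) (lam * h (γ τ) - ⟪w, Fn (γ τ)⟫) τ := fun τ => by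
    convert (hdiff (γ τ)).hasGradientAt.comp_hasDerivAt (hγ τ) using 1
    linarith [hpde (γ τ)]
  rw [integral_exp_neg_mul_mul_eq_sub (fun τ _ => hflow τ) (hcont.intervalIntegrable 0 tx),
    Function.comp_apply, Function.comp_apply, hγ0, sub_sub_cancel, abs_mul, abs_exp]
  have hdecay : exp (-lam * tx) ≤ 1 :=
    exp_le_one_iff.mpr (mul_nonpos_of_nonpos_of_nonneg (neg_nonpos.mpr hlam.le) htx)
  exact (mul_le_of_le_one_left (abs_nonneg _) hdecay).trans (hsmall _ hreach)

/-- If `|h| ≤ δ` on the `ε`-ball around the origin and the trajectory from `x`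
reaches that ball at time `t(x) ≥ 0`, then the truncated path-integral approximates `h(x)`
with error at most `δ`. -/
theorem stmt3 {n : ℕ}
    (f : EuclideanSpace ℝ (Fin n) → EuclideanSpace ℝ (Fin n))
    (A : Matrix (Fin n) (Fin n) ℝ)
    (Fn : EuclideanSpace ℝ (Fin n) → EuclideanSpace ℝ (Fin n))
    (hFn : ∀ x, Fn x = f x - Matrix.toEuclideanLin A x)
    (lam : ℝ) (hlam : 0 < lam) (w : EuclideanSpace ℝ (Fin n))
    (h : EuclideanSpace ℝ (Fin n) → ℝ)
    (hdiff : Differentiable ℝ h)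
    (hpde : ∀ x, ⟪gradient h x, f x⟫ - lam * h x + ⟪w, Fn x⟫ = 0)
    (ε δ : ℝ) (hε : 0 < ε) (hδ : 0 ≤ δ)
    (hsmall : ∀ y : EuclideanSpace ℝ (Fin n), ‖y‖ ≤ ε → |h y| ≤ δ)
    (x : EuclideanSpace ℝ (Fin n))
    (γ : ℝ → EuclideanSpace ℝ (Fin n))
    (hγ : ∀ τ, HasDerivAt γ (f (γ τ)) τ)
    (hγ0 : γ 0 = x)
    (hcont : Continuous fun τ => (⟪w, Fn (γ τ)⟫ : ℝ))
    (tx : ℝ) (htx : 0 ≤ tx) (hreach : ‖γ tx‖ ≤ ε) :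
    |h x - ∫ τ in (0 : ℝ)..tx, Real.exp (-lam * τ) * ⟪w, Fn (γ τ)⟫| ≤ δ :=
  stmt3_general f Fn lam hlam w h hdiff hpde ε δ hsmall x γ hγ hγ0 hcont tx htx hreach
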